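/- Let λ ∈ (1/2, 1). Then for Lebesgue-almost every x ∈ (0,1], the forward orbit escapes to the origin: F_λ^n(x) → 0 as n → ∞. In particular Lebesgue measure is dissipative for F_λ. -/

import Mathlib

open MeasureTheory Set Filter Topology

/-- The Markov partition interval `W n = (lam^n, lam^(n-1)]` for `n ≥ 1`. -/
noncomputable def Wint (lam : ℝ) (n : ℕ) : Set ℝ := Set.Ioc (lam ^ n) (lam ^ (n - 1))

/-- The map `F_lam : (0,1] → (0,1]`, extended by the identity outside `(0,1]`.
On `W n` it is `x ↦ (x - lam^n)/(lam(1-lam))` for `n ≥ 2` and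
`x ↦ (x - lam)/(1-lam)` on `W 1`; for `x ∈ (0,1]` the branch index is
the least `n` with `lam^n < x`. -/
noncomputable def Flam (lam : ℝ) (x : ℝ) : ℝ :=
  if 0 < x ∧ x ≤ 1 then
    if sInf {n : ℕ | lam ^ n < x} = 1 then (x - lam) / (1 - lam)
    else (x - lam ^ sInf {n : ℕ | lam ^ n < x}) / (lam * (1 - lam))
  else x

/-- The slope of `F_lam` on the branch `W n`. -/
noncomputable def slopeW (lam : ℝ) (n : ℕ) : ℝ :=
  if n = 1 then 1 / (1 - lam) else 1 / (lam * (1 - lam))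

/-- A Borel measure `m` on `(0,1]` is `(t,p)`-conformal for `F_lam` if for every
branch `W n` and every Borel `A ⊆ W n` one has `m(F_lam(A)) = e^p * s_n^t * m(A)`. -/
def IsConformal (lam t p : ℝ) (m : Measure ℝ) : Prop :=
  ∀ n : ℕ, 1 ≤ n → ∀ A : Set ℝ, MeasurableSet A → A ⊆ Wint lam n →
    m (Flam lam '' A) = ENNReal.ofReal (Real.exp p * slopeW lam n ^ t) * m A

/-- A set is wandering for `F_lam` if its preimages under all iterates are
pairwise disjoint. -/
def IsWanderingSet (lam : ℝ) (A : Set ℝ) : Prop :=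
  Pairwise fun i j : ℕ => Disjoint ((Flam lam)^[i] ⁻¹' A) ((Flam lam)^[j] ⁻¹' A)

/-!
Weight Lebesgue measure by `2 ^ n` on `W n`. A set `A ⊆ W m` is covered by `F` only from the
branches `W 1, …, W (m + 1)`, which `F` stretches by `1 / (1 - λ)` and `1 / (λ (1 - λ))`, so the
weighted measure of `F⁻¹ A` is at most `(2 (1 - λ) + (4 + ⋯ + 2 ^ (m + 1)) λ (1 - λ)) |A|`, which is
`≤ 4 λ (1 - λ) 2 ^ m |A|` as soon as `λ ≥ 1/2`. So pulling back by `F` contracts the weighted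
measure by `ρ = 4 λ (1 - λ)`, and `ρ < 1` for `λ ≠ 1/2`. The weighted measures of
`F^{-k} (λ ^ N, 1]` are therefore summable, and by Borel–Cantelli almost every orbit eventually
stays in `(0, λ ^ N]`, for every `N`.
-/

open scoped ENNReal

section Iterate

variable {α : Type*} [MeasurableSpace α] {μ : Measure α} {f : α → α} {s A : Set α} {c : ℝ≥0∞}

theorem measure_preimage_iterate_inter_le_pow (hf : Measurable f) (hs : MeasurableSet s)
    (hmaps : MapsTo f s s) (hc : ∀ B, MeasurableSet B → B ⊆ s → μ (f ⁻¹' B ∩ s) ≤ c * μ B)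
    (k : ℕ) (hA : MeasurableSet A) (hAs : A ⊆ s) :
    μ (f^[k] ⁻¹' A ∩ s) ≤ c ^ k * μ A := by
  induction k generalizing A with
  | zero => simpa using measure_mono (inter_subset_left : A ∩ s ⊆ A)
  | succ k ih =>
    have hsub : f^[k + 1] ⁻¹' A ∩ s ⊆ f^[k] ⁻¹' (f ⁻¹' A ∩ s) ∩ s := fun x ⟨hx, hxs⟩ =>
      ⟨⟨by rwa [mem_preimage, ← Function.iterate_succ_apply' f k x], hmaps.iterate k hxs⟩, hxs⟩
    calc μ (f^[k + 1] ⁻¹' A ∩ s) ≤ μ (f^[k] ⁻¹' (f ⁻¹' A ∩ s) ∩ s) := measure_mono hsub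
      _ ≤ c ^ k * μ (f ⁻¹' A ∩ s) := ih ((hf hA).inter hs) inter_subset_right
      _ ≤ c ^ k * (c * μ A) := by gcongr; exact hc A hA hAs
      _ = c ^ (k + 1) * μ A := by ring

theorem ae_restrict_eventually_iterate_notMem (hf : Measurable f) (hs : MeasurableSet s)
    (hmaps : MapsTo f s s) (hc : ∀ B, MeasurableSet B → B ⊆ s → μ (f ⁻¹' B ∩ s) ≤ c * μ B)
    (hc1 : c < 1) (hA : MeasurableSet A) (hAs : A ⊆ s) (hμA : μ A ≠ ∞) :
    ∀ᵐ x ∂μ.restrict s, ∀ᶠ k in atTop, f^[k] x ∉ A := by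
  apply ae_eventually_notMem (s := fun k => f^[k] ⁻¹' A)
  have hle (k : ℕ) : μ.restrict s (f^[k] ⁻¹' A) ≤ c ^ k * μ A := by
    rw [Measure.restrict_apply (hf.iterate k hA)]
    exact measure_preimage_iterate_inter_le_pow hf hs hmaps hc k hA hAs
  refine ne_top_of_le_ne_top ?_ (ENNReal.tsum_le_tsum hle)
  rw [ENNReal.tsum_mul_right, ENNReal.tsum_geometric]
  exact ENNReal.mul_ne_top (ENNReal.inv_ne_top.2 (tsub_pos_of_lt hc1).ne') hμA

end Iterate

theorem tendsto_zero_of_forall_eventually_notMem_Ioc {u : ℕ → ℝ} {lam : ℝ} (h0 : 0 < lam)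
    (h2 : lam < 1) (hu : ∀ k, u k ∈ Ioc 0 1)
    (hleave : ∀ N : ℕ, ∀ᶠ k in atTop, u k ∉ Ioc (lam ^ N) 1) :
    Tendsto u atTop (𝓝 0) := by
  refine tendsto_order.2 ⟨fun a ha => .of_forall fun k => ha.trans (hu k).1, fun a ha => ?_⟩
  obtain ⟨N, hN⟩ := ((tendsto_pow_atTop_nhds_zero_of_lt_one h0.le h2).eventually
    (gt_mem_nhds ha)).exists
  filter_upwards [hleave N] with k hk
  have : u k ≤ lam ^ N := not_lt.1 fun h => hk ⟨h, (hu k).2⟩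
  exact this.trans_lt hN

section Flam

variable {lam x : ℝ} {m n : ℕ}

noncomputable def branchIndex (lam x : ℝ) : ℕ := sInf {n : ℕ | lam ^ n < x}

theorem Flam_def (lam x : ℝ) : Flam lam x =
    if 0 < x ∧ x ≤ 1 then
      if branchIndex lam x = 1 then (x - lam) / (1 - lam)
      else (x - lam ^ branchIndex lam x) / (lam * (1 - lam))
    else x := rfl

theorem measurableSet_Wint : MeasurableSet (Wint lam m) := measurableSet_Ioc

theorem Wint_subset_Ioc (h0 : 0 < lam) (h2 : lam < 1) : Wint lam m ⊆ Ioc 0 1 :=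
  fun _ hx => ⟨(pow_pos h0 m).trans hx.1, hx.2.trans (pow_le_one₀ h0.le h2.le)⟩

theorem branchIndex_eq_of_mem_Wint (h0 : 0 < lam) (h2 : lam < 1) (hm : 1 ≤ m)
    (hx : x ∈ Wint lam m) : branchIndex lam x = m := by
  refine le_antisymm (Nat.sInf_le hx.1) (not_lt.1 fun hlt => ?_)
  have hlt_x : lam ^ branchIndex lam x < x :=
    Nat.sInf_mem (⟨m, hx.1⟩ : {n : ℕ | lam ^ n < x}.Nonempty)
  have : lam ^ (m - 1) ≤ lam ^ branchIndex lam x := pow_le_pow_of_le_one h0.le h2.le (by omega)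
  exact (hx.2.trans this).not_gt hlt_x

theorem exists_mem_Wint (h0 : 0 < lam) (h2 : lam < 1) (hx : x ∈ Ioc 0 1) :
    ∃ n, 1 ≤ n ∧ x ∈ Wint lam n := by
  have hne : {n : ℕ | lam ^ n < x}.Nonempty :=
    ((tendsto_pow_atTop_nhds_zero_of_lt_one h0.le h2).eventually (gt_mem_nhds hx.1)).exists
  have hlt : lam ^ branchIndex lam x < x := Nat.sInf_mem hne
  have hpos : 1 ≤ branchIndex lam x := Nat.one_le_iff_ne_zero.2 fun h => by
    rw [h, pow_zero] at hlt; exact hx.2.not_gt hlt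
  refine ⟨_, hpos, hlt, not_lt.1 fun h => ?_⟩
  exact Nat.notMem_of_lt_sInf (show branchIndex lam x - 1 < branchIndex lam x by omega) h

theorem iUnion_Wint_succ (h0 : 0 < lam) (h2 : lam < 1) :
    ⋃ n : ℕ, Wint lam (n + 1) = Ioc 0 1 := by
  refine Subset.antisymm (iUnion_subset fun n => Wint_subset_Ioc h0 h2) fun x hx => ?_
  obtain ⟨n, hn, hxn⟩ := exists_mem_Wint h0 h2 hx
  exact mem_iUnion.2 ⟨n - 1, by rwa [Nat.sub_add_cancel hn]⟩

theorem pairwise_disjoint_Wint_succ (h0 : 0 < lam) (h2 : lam < 1) :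
    Pairwise (Function.onFun Disjoint fun n : ℕ => Wint lam (n + 1)) := fun i j hij =>
  disjoint_left.2 fun x hi hj => hij <| by
    have := (branchIndex_eq_of_mem_Wint h0 h2 (by omega) hi).symm.trans
      (branchIndex_eq_of_mem_Wint h0 h2 (by omega) hj)
    omega

theorem branchIndex_eq_zero_of_notMem (h0 : 0 ≤ lam) (hx : x ∉ Ioc 0 1) :
    branchIndex lam x = 0 := by
  rcases not_and_or.1 hx with hx | hx
  · have : {n : ℕ | lam ^ n < x} = ∅ :=
      eq_empty_of_forall_notMem fun n hn => hx ((pow_nonneg h0 n).trans_lt hn)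
    rw [branchIndex, this, Nat.sInf_empty]
  · exact Nat.sInf_eq_zero.2 (.inl (by simpa using hx))

theorem measurable_branchIndex (h0 : 0 < lam) (h2 : lam < 1) : Measurable (branchIndex lam) := by
  refine measurable_to_countable' fun m => ?_
  rcases Nat.eq_zero_or_pos m with rfl | hm
  · have : branchIndex lam ⁻¹' {0} = (Ioc 0 1)ᶜ := by
      ext x
      refine ⟨fun hx hx01 => ?_, branchIndex_eq_zero_of_notMem h0.le⟩
      obtain ⟨n, hn, hxn⟩ := exists_mem_Wint h0 h2 hx01
      have : branchIndex lam x = n := branchIndex_eq_of_mem_Wint h0 h2 hn hxn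
      rw [mem_preimage, mem_singleton_iff] at hx
      omega
    exact this ▸ measurableSet_Ioc.compl
  · have : branchIndex lam ⁻¹' {m} = Wint lam m := by
      ext x
      refine ⟨fun hx => ?_, branchIndex_eq_of_mem_Wint h0 h2 hm⟩
      rw [mem_preimage, mem_singleton_iff] at hx
      have hx01 : x ∈ Ioc 0 1 := by_contra fun h => by
        have := branchIndex_eq_zero_of_notMem h0.le h
        omega
      obtain ⟨n, hn, hxn⟩ := exists_mem_Wint h0 h2 hx01
      rwa [← hx, branchIndex_eq_of_mem_Wint h0 h2 hn hxn]
    exact this ▸ measurableSet_Wint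

theorem slopeW_pos (h0 : 0 < lam) (h2 : lam < 1) (m : ℕ) : 0 < slopeW lam m := by
  have : 0 < lam * (1 - lam) := mul_pos h0 (by linarith)
  unfold slopeW; split_ifs <;> positivity

theorem Flam_eq_of_mem_Wint (h0 : 0 < lam) (h2 : lam < 1) (hm : 1 ≤ m) (hx : x ∈ Wint lam m) :
    Flam lam x = slopeW lam m * (x - lam ^ m) := by
  have hx01 := Wint_subset_Ioc h0 h2 hx
  rw [Flam_def, if_pos ⟨hx01.1, hx01.2⟩, branchIndex_eq_of_mem_Wint h0 h2 hm hx, slopeW]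
  split_ifs with h
  · rw [h, pow_one, one_div_mul_eq_div]
  · rw [one_div_mul_eq_div]

/-- For `m = 1` this reads `Flam lam x ≤ 1`, since `1 - 2 = 0` in `ℕ`. -/
theorem Flam_le_pow_of_mem_Wint (h0 : 0 < lam) (h2 : lam < 1) (hm : 1 ≤ m)
    (hx : x ∈ Wint lam m) : Flam lam x ≤ lam ^ (m - 2) := by
  have h1l : 0 < 1 - lam := by linarith
  rw [Flam_eq_of_mem_Wint h0 h2 hm hx]
  calc slopeW lam m * (x - lam ^ m) ≤ slopeW lam m * (lam ^ (m - 1) - lam ^ m) := by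
        gcongr
        · exact (slopeW_pos h0 h2 m).le
        · exact hx.2
    _ = lam ^ (m - 2) := by
        rcases eq_or_lt_of_le hm with rfl | hm2
        · simp only [slopeW, if_true]; field_simp; ring
        · obtain ⟨k, rfl⟩ : ∃ k, m = k + 2 := ⟨m - 2, by omega⟩
          simp only [slopeW, show k + 2 ≠ 1 by omega, if_false, show k + 2 - 1 = k + 1 by omega,
            show k + 2 - 2 = k by omega]
          field_simp; ring

theorem mapsTo_Flam_Ioc (h0 : 0 < lam) (h2 : lam < 1) : MapsTo (Flam lam) (Ioc 0 1) (Ioc 0 1) := by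
  intro x hx
  obtain ⟨n, hn, hxn⟩ := exists_mem_Wint h0 h2 hx
  refine ⟨?_, (Flam_le_pow_of_mem_Wint h0 h2 hn hxn).trans (pow_le_one₀ h0.le h2.le)⟩
  rw [Flam_eq_of_mem_Wint h0 h2 hn hxn]
  exact mul_pos (slopeW_pos h0 h2 n) (sub_pos.2 hxn.1)

theorem measurable_Flam (h0 : 0 < lam) (h2 : lam < 1) : Measurable (Flam lam) := by
  have hidx := measurable_branchIndex h0 h2
  simp_rw [funext (Flam_def lam)]
  refine Measurable.ite measurableSet_Ioc (Measurable.ite (hidx (measurableSet_singleton 1))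
    (by fun_prop) ?_) measurable_id
  exact (measurable_id.sub ((measurable_from_top (f := (lam ^ · : ℕ → ℝ))).comp hidx)).div_const _

theorem volume_preimage_Flam_inter_Wint_le (h0 : 0 < lam) (h2 : lam < 1) (hm : 1 ≤ m)
    (A : Set ℝ) :
    volume (Flam lam ⁻¹' A ∩ Wint lam m) ≤ ENNReal.ofReal (slopeW lam m)⁻¹ * volume A := by
  have hs := slopeW_pos h0 h2 m
  have hsub : Flam lam ⁻¹' A ∩ Wint lam m ⊆
      (fun x => x + -lam ^ m) ⁻¹' ((slopeW lam m * ·) ⁻¹' A) := fun x ⟨hxA, hxm⟩ => by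
    simpa [← sub_eq_add_neg, Flam_eq_of_mem_Wint h0 h2 hm hxm] using hxA
  calc volume (Flam lam ⁻¹' A ∩ Wint lam m)
      ≤ volume ((fun x => x + -lam ^ m) ⁻¹' ((slopeW lam m * ·) ⁻¹' A)) := measure_mono hsub
    _ = ENNReal.ofReal (slopeW lam m)⁻¹ * volume A := by
        rw [measure_preimage_add_right, Real.volume_preimage_mul_left hs.ne',
          abs_of_pos (inv_pos.2 hs)]

theorem preimage_Flam_inter_Wint_eq_empty (h0 : 0 < lam) (h2 : lam < 1) {A : Set ℝ}
    (hA : A ⊆ Wint lam m) (hn : m + 2 ≤ n) : Flam lam ⁻¹' A ∩ Wint lam n = ∅ := by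
  refine eq_empty_of_forall_notMem fun x ⟨hxA, hxn⟩ => ?_
  have hle := Flam_le_pow_of_mem_Wint h0 h2 (by omega) hxn
  have hmono : lam ^ (n - 2) ≤ lam ^ m := pow_le_pow_of_le_one h0.le h2.le (by omega)
  exact (hA hxA).1.not_ge (hle.trans hmono)

theorem sum_two_pow_mul_inv_slopeW_le (h1 : 1 / 2 ≤ lam) (h2 : lam ≤ 1) (m : ℕ) :
    ∑ n ∈ Finset.range (m + 1), (2 : ℝ) ^ (n + 1) * (slopeW lam (n + 1))⁻¹ ≤
      4 * lam * (1 - lam) * 2 ^ m := by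
  induction m with
  | zero => simp [slopeW]; nlinarith
  | succ k ih =>
    rw [Finset.sum_range_succ]
    simp only [slopeW, show k + 1 + 1 ≠ 1 by omega, if_false, one_div, inv_inv] at ih ⊢
    rw [pow_succ, pow_succ]
    nlinarith

theorem measure_inter_Ioc_eq_tsum_Wint (h0 : 0 < lam) (h2 : lam < 1) (μ : Measure ℝ)
    {B : Set ℝ} (hB : MeasurableSet B) :
    μ (B ∩ Ioc 0 1) = ∑' n : ℕ, μ (B ∩ Wint lam (n + 1)) := by
  rw [← iUnion_Wint_succ h0 h2, inter_iUnion]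
  exact measure_iUnion ((pairwise_disjoint_Wint_succ h0 h2).mono fun i j h =>
    h.mono inter_subset_right inter_subset_right) fun _ => hB.inter measurableSet_Wint

noncomputable def weightedVolume (lam : ℝ) : Measure ℝ :=
  volume.withDensity fun x => 2 ^ branchIndex lam x

theorem weightedVolume_of_subset_Wint (h0 : 0 < lam) (h2 : lam < 1) (hm : 1 ≤ m) {A : Set ℝ}
    (hA : MeasurableSet A) (hAm : A ⊆ Wint lam m) : weightedVolume lam A = 2 ^ m * volume A := by
  rw [weightedVolume, withDensity_apply _ hA,
    setLIntegral_congr_fun hA fun x hx => by rw [branchIndex_eq_of_mem_Wint h0 h2 hm (hAm hx)]]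
  exact setLIntegral_const A _

theorem weightedVolume_Ioc_pow_le (h0 : 0 < lam) (N : ℕ) :
    weightedVolume lam (Ioc (lam ^ N) 1) ≤ 2 ^ N := by
  rw [weightedVolume, withDensity_apply _ measurableSet_Ioc]
  calc ∫⁻ x in Ioc (lam ^ N) 1, 2 ^ branchIndex lam x
      ≤ ∫⁻ _ in Ioc (lam ^ N) 1, 2 ^ N := setLIntegral_mono (by fun_prop) fun x hx =>
        pow_le_pow_right' one_le_two (Nat.sInf_le hx.1)
    _ = 2 ^ N * ENNReal.ofReal (1 - lam ^ N) := by rw [setLIntegral_const, Real.volume_Ioc]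
    _ ≤ 2 ^ N := mul_le_of_le_one_right' (ENNReal.ofReal_le_one.2 (by linarith [pow_pos h0 N]))

theorem volume_absolutelyContinuous_weightedVolume (h0 : 0 < lam) (h2 : lam < 1) :
    volume ≪ weightedVolume lam :=
  withDensity_absolutelyContinuous'
    ((measurable_from_top (f := ((2 : ℝ≥0∞) ^ · : ℕ → ℝ≥0∞))).comp
      (measurable_branchIndex h0 h2)).aemeasurable
    (.of_forall fun _ => pow_ne_zero _ two_ne_zero)

theorem weightedVolume_preimage_Flam_le_of_subset_Wint (h1 : 1 / 2 < lam) (h2 : lam < 1)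
    (hm : 1 ≤ m) {A : Set ℝ} (hA : MeasurableSet A) (hAm : A ⊆ Wint lam m) :
    weightedVolume lam (Flam lam ⁻¹' A ∩ Ioc 0 1) ≤
      ENNReal.ofReal (4 * lam * (1 - lam)) * weightedVolume lam A := by
  have h0 : 0 < lam := by linarith
  have hFA : MeasurableSet (Flam lam ⁻¹' A) := measurable_Flam h0 h2 hA
  have hbranch (n : ℕ) : weightedVolume lam (Flam lam ⁻¹' A ∩ Wint lam (n + 1)) ≤
      ENNReal.ofReal (2 ^ (n + 1) * (slopeW lam (n + 1))⁻¹) * volume A := by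
    rw [weightedVolume_of_subset_Wint h0 h2 (by omega) (hFA.inter measurableSet_Wint)
      inter_subset_right, ENNReal.ofReal_mul (by positivity), ENNReal.ofReal_pow zero_le_two,
      ENNReal.ofReal_ofNat, mul_assoc]
    gcongr
    exact volume_preimage_Flam_inter_Wint_le h0 h2 (by omega) A
  calc weightedVolume lam (Flam lam ⁻¹' A ∩ Ioc 0 1)
      = ∑ n ∈ Finset.range (m + 1), weightedVolume lam (Flam lam ⁻¹' A ∩ Wint lam (n + 1)) := by
        rw [measure_inter_Ioc_eq_tsum_Wint h0 h2 _ hFA]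
        refine tsum_eq_sum fun n hn => ?_
        rw [preimage_Flam_inter_Wint_eq_empty h0 h2 hAm (by simp at hn; omega), measure_empty]
    _ ≤ ∑ n ∈ Finset.range (m + 1),
          ENNReal.ofReal (2 ^ (n + 1) * (slopeW lam (n + 1))⁻¹) * volume A :=
        Finset.sum_le_sum fun n _ => hbranch n
    _ = ENNReal.ofReal (∑ n ∈ Finset.range (m + 1), 2 ^ (n + 1) * (slopeW lam (n + 1))⁻¹) *
          volume A := by
        rw [ENNReal.ofReal_sum_of_nonneg fun n _ =>
          mul_nonneg (by positivity) (inv_pos.2 (slopeW_pos h0 h2 _)).le, Finset.sum_mul]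
    _ ≤ ENNReal.ofReal (4 * lam * (1 - lam) * 2 ^ m) * volume A := by
        gcongr
        exact sum_two_pow_mul_inv_slopeW_le h1.le h2.le m
    _ = ENNReal.ofReal (4 * lam * (1 - lam)) * weightedVolume lam A := by
        rw [weightedVolume_of_subset_Wint h0 h2 hm hA hAm, ENNReal.ofReal_mul (by nlinarith),
          ENNReal.ofReal_pow zero_le_two, ENNReal.ofReal_ofNat, mul_assoc]

theorem weightedVolume_preimage_Flam_le (h1 : 1 / 2 < lam) (h2 : lam < 1) {A : Set ℝ}
    (hA : MeasurableSet A) (hAs : A ⊆ Ioc 0 1) :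
    weightedVolume lam (Flam lam ⁻¹' A ∩ Ioc 0 1) ≤
      ENNReal.ofReal (4 * lam * (1 - lam)) * weightedVolume lam A := by
  have h0 : 0 < lam := by linarith
  have hcover : Flam lam ⁻¹' A ∩ Ioc 0 1 =
      ⋃ n : ℕ, Flam lam ⁻¹' (A ∩ Wint lam (n + 1)) ∩ Ioc 0 1 := by
    rw [← iUnion_inter, ← preimage_iUnion, ← inter_iUnion, iUnion_Wint_succ h0 h2,
      inter_eq_left.2 hAs]
  calc weightedVolume lam (Flam lam ⁻¹' A ∩ Ioc 0 1)
      ≤ ∑' n : ℕ, weightedVolume lam (Flam lam ⁻¹' (A ∩ Wint lam (n + 1)) ∩ Ioc 0 1) :=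
        hcover ▸ measure_iUnion_le _
    _ ≤ ∑' n : ℕ,
          ENNReal.ofReal (4 * lam * (1 - lam)) * weightedVolume lam (A ∩ Wint lam (n + 1)) :=
        ENNReal.tsum_le_tsum fun n => weightedVolume_preimage_Flam_le_of_subset_Wint h1 h2
          (by omega) (hA.inter measurableSet_Wint) inter_subset_right
    _ = ENNReal.ofReal (4 * lam * (1 - lam)) * weightedVolume lam A := by
        rw [ENNReal.tsum_mul_left, ← measure_inter_Ioc_eq_tsum_Wint h0 h2 _ hA,
          inter_eq_left.2 hAs]

end Flam

/-- For `lam ∈ (1/2, 1)`, for Lebesgue-a.e. `x ∈ (0,1]` the orbit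
`F_lam^n(x)` tends to `0`; in particular Lebesgue measure is dissipative. -/
theorem stmt2 (lam : ℝ) (h1 : 1/2 < lam) (h2 : lam < 1) :
    ∀ᵐ x ∂(volume.restrict (Set.Ioc (0:ℝ) 1)),
      Filter.Tendsto (fun n => (Flam lam)^[n] x) Filter.atTop (nhds 0) := by
  have h0 : 0 < lam := by linarith
  have hρ : ENNReal.ofReal (4 * lam * (1 - lam)) < 1 := ENNReal.ofReal_lt_one.2 (by nlinarith)
  have hleave (N : ℕ) : ∀ᵐ x ∂volume.restrict (Ioc (0 : ℝ) 1),
      ∀ᶠ k in atTop, (Flam lam)^[k] x ∉ Ioc (lam ^ N) 1 :=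
    ((volume_absolutelyContinuous_weightedVolume h0 h2).restrict _).ae_le <|
      ae_restrict_eventually_iterate_notMem (measurable_Flam h0 h2) measurableSet_Ioc
        (mapsTo_Flam_Ioc h0 h2) (fun _ hB hBs => weightedVolume_preimage_Flam_le h1 h2 hB hBs) hρ
        measurableSet_Ioc (Ioc_subset_Ioc_left (pow_pos h0 N).le)
        (ne_top_of_le_ne_top (by simp) (weightedVolume_Ioc_pow_le h0 N))
  filter_upwards [ae_all_iff.2 hleave, ae_restrict_mem measurableSet_Ioc] with x hx hx01
  exact tendsto_zero_of_forall_eventually_notMem_Ioc h0 h2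
    (fun k => (mapsTo_Flam_Ioc h0 h2).iterate k hx01) hx
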